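/- Let φ : A' → A be a morphism of layered automata over a finite alphabet Σ that preserves strong acceptance, i.e. for every state p' of A' and every infinite word w: if w is strongly accepted by p' in A' then w is strongly accepted by φ(p') in A, and if w is strongly rejected by p' in A' then w is strongly rejected by φ(p') in A. If A is consistent, then A' is consistent and the set of infinite words accepted by A' under layered acceptance equals the set of infinite words accepted by A under layered acceptance. -/

import Mathlib

open scoped Classical

noncomputable section

/-! ### Infinite words and the parity condition -/

/-- The minimal value occurring infinitely often in a sequence of priorities;
for (eventually) bounded sequences this is the `liminf`. -/
def minInfOften (pi : ℕ → ℕ) : ℕ := sInf {x : ℕ | ∀ N : ℕ, ∃ n : ℕ, N ≤ n ∧ pi n = x}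

/-- The (min-)parity acceptance condition: the liminf of the priorities is even. -/
def ParityAccept (pi : ℕ → ℕ) : Prop := Even (minInfOften pi)

/-- Prepend a finite word to an infinite word. -/
def prependW {α : Type} (u : List α) (w : ℕ → α) : ℕ → α := fun i =>
  if h : i < u.length then u.get ⟨i, h⟩ else w (i - u.length)

/-- The prefix of length `n` of an infinite word, as a list. -/
def wordPrefix {α : Type} (w : ℕ → α) (n : ℕ) : List α := List.ofFn (fun i : Fin n => w i)

/-- Drop the first `n` letters of an infinite word. -/
def wordDrop {α : Type} (w : ℕ → α) (n : ℕ) : ℕ → α := fun i => w (n + i)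

/-- The periodic infinite word `v^ω` (junk if `v = []`). -/
def perWord {α : Type} [Inhabited α] (v : List α) : ℕ → α := fun i => v.getD (i % v.length) default

/-! ### Layered automata -/

/-- A layered automaton over the alphabet `α` with `d` layers.  The (disjoint) layers
are encoded by the function `layer : Q → [1,d]`; each layer is a deterministic
transition system (partial transition function `δ`, which stays inside the layer);
`μ` sends each state of layer `x+1` to its parent in layer `x` (and is the identity
on layer `1`) and is a morphism of transition systems; layer `1` is complete, carries
the initial state, and all its states are reachable from the initial state. -/
structure Layered (Q α : Type) (d : ℕ) where
  layer : Q → ℕ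
  layer_pos : ∀ q, 1 ≤ layer q
  layer_le : ∀ q, layer q ≤ d
  δ : Q → α → Option Q
  δ_layer : ∀ q a q', δ q a = some q' → layer q' = layer q
  μ : Q → Q
  μ_layer : ∀ q, 1 < layer q → layer (μ q) + 1 = layer q
  μ_id : ∀ q, layer q = 1 → μ q = q
  μ_morph : ∀ q a q', 1 < layer q → δ q a = some q' → δ (μ q) a = some (μ q')
  init : Q
  init_layer : layer init = 1
  complete1 : ∀ q a, layer q = 1 → (δ q a).isSome = true
  reach1 : ∀ q, layer q = 1 →
    Relation.ReflTransGen (fun p p' => layer p = 1 ∧ ∃ a, δ p a = some p') init q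

namespace Layered

variable {Q R α : Type} {d d' : ℕ}

/-- The run of the (deterministic) layer transition systems on a finite word. -/
def runList (A : Layered Q α d) : Q → List α → Option Q
  | q, [] => some q
  | q, a :: u =>
    match A.δ q a with
    | some q' => runList A q' u
    | none => none

/-- `μ̂_x q`: the ancestor of `q` in layer `x` (image under the composed morphisms). -/
def muHat (A : Layered Q α d) (x : ℕ) (q : Q) : Q := (A.μ)^[A.layer q - x] q

/-- A leaf state: a state that is not in the image of any of the morphisms `μ_x`. -/
def IsLeaf (A : Layered Q α d) (q : Q) : Prop := ∀ p, 1 < A.layer p → A.μ p ≠ q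

/-- `layer(q,a)`: the largest layer `x ≤ layer q` in which `δ_x (μ̂_x q) a` is defined. -/
def layerOf (A : Layered Q α d) (q : Q) (a : α) : ℕ :=
  Nat.findGreatest (fun x => (A.δ (A.muHat x q) a).isSome = true) (A.layer q)

/-- A state `p` is an ancestor of `q`. -/
def IsAncestor (A : Layered Q α d) (p q : Q) : Prop :=
  A.layer p ≤ A.layer q ∧ A.muHat (A.layer p) q = p

/-! #### Safe languages and strong acceptance -/

/-- Membership of a finite word in the `x`-safe language of `q`. -/
def SafeFin (A : Layered Q α d) (x : ℕ) (q : Q) (u : List α) : Prop :=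
  (A.runList (A.muHat x q) u).isSome = true

/-- Membership of an infinite word in the `x`-safe language of `q`. -/
def SafeInf (A : Layered Q α d) (x : ℕ) (q : Q) (w : ℕ → α) : Prop :=
  ∀ n : ℕ, A.SafeFin x q (wordPrefix w n)

/-- `w` is strongly accepted by the state `p` (which lies in the even layer `x = layer p`):
`w` is `x`-safe from `p` and no decomposition `w = u·w'` admits a state `p'` of layer `x+1`
with a `u`-run from `p` to the parent of `p'` in `T_x` such that `w'` is `(x+1)`-safe from `p'`. -/
def StronglyAcc (A : Layered Q α d) (p : Q) (w : ℕ → α) : Prop :=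
  Even (A.layer p) ∧ A.SafeInf (A.layer p) p w ∧
  ∀ (n : ℕ) (p' : Q), A.layer p' = A.layer p + 1 →
    A.runList p (wordPrefix w n) = some (A.μ p') →
    ¬ A.SafeInf (A.layer p') p' (wordDrop w n)

/-- `w` is strongly rejected by `p` (lying in an odd layer). -/
def StronglyRej (A : Layered Q α d) (p : Q) (w : ℕ → α) : Prop :=
  Odd (A.layer p) ∧ A.SafeInf (A.layer p) p w ∧
  ∀ (n : ℕ) (p' : Q), A.layer p' = A.layer p + 1 →
    A.runList p (wordPrefix w n) = some (A.μ p') →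
    ¬ A.SafeInf (A.layer p') p' (wordDrop w n)

/-- Consistency: no two states with the same layer-1 ancestor strongly accept
resp. strongly reject a common infinite word. -/
def Consistent (A : Layered Q α d) : Prop :=
  ¬ ∃ (p p' : Q) (w : ℕ → α), A.muHat 1 p = A.muHat 1 p' ∧
      A.StronglyAcc p w ∧ A.StronglyRej p' w

/-- `w` is ultimately safe in layer `x`, for the automaton started in the
layer-1 state `q0`. -/
def UltSafeFrom (A : Layered Q α d) (q0 : Q) (x : ℕ) (w : ℕ → α) : Prop :=
  ∃ (n : ℕ) (p : Q), A.layer p = x ∧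
    A.runList q0 (wordPrefix w n) = some (A.muHat 1 p) ∧
    A.SafeInf x p (wordDrop w n)

/-- Layered acceptance from `q0`: the maximal layer in which `w` is ultimately safe is even. -/
def LayeredAcceptFrom (A : Layered Q α d) (q0 : Q) (w : ℕ → α) : Prop :=
  ∃ x : ℕ, Even x ∧ A.UltSafeFrom q0 x w ∧ ∀ y : ℕ, A.UltSafeFrom q0 y w → y ≤ x

/-- Layered rejection from `q0`: the maximal layer in which `w` is ultimately safe is odd. -/
def LayeredRejectFrom (A : Layered Q α d) (q0 : Q) (w : ℕ → α) : Prop :=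
  ∃ x : ℕ, Odd x ∧ A.UltSafeFrom q0 x w ∧ ∀ y : ℕ, A.UltSafeFrom q0 y w → y ≤ x

/-! #### The semantics automaton `⟦A⟧` (a simple-by-priorities alternating parity automaton) -/

/-- The priority of the letter `a` in the state `q` of `⟦A⟧`. -/
def semPrio (A : Layered Q α d) (q : Q) (a : α) : ℕ := A.layerOf q a

/-- The transitions of `⟦A⟧` (between leaf states): `q —a→ q'` iff, for
`x = layer(q,a)`, we have `δ_x (μ̂_x q) a = μ̂_x q'`; the transition carries priority `x`. -/
def semStep (A : Layered Q α d) (q : Q) (a : α) (q' : Q) : Prop :=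
  A.IsLeaf q' ∧ A.δ (A.muHat (A.layerOf q a) q) a = some (A.muHat (A.layerOf q a) q')

/-- Runs of `⟦A⟧` over the infinite word `w`, starting in `p`. -/
def IsSemRun (A : Layered Q α d) (w : ℕ → α) (p : Q) (ρ : ℕ → Q) : Prop :=
  ρ 0 = p ∧ ∀ i : ℕ, A.semStep (ρ i) (w i) (ρ (i + 1))

/-- The sequence of priorities produced by a run of `⟦A⟧` over `w`. -/
def runPrios (A : Layered Q α d) (w : ℕ → α) (ρ : ℕ → Q) : ℕ → ℕ :=
  fun i => A.semPrio (ρ i) (w i)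

/-- A resolver for Eve in `⟦A⟧`: given the history (the finite run so far, as a list of
(state, letter) pairs), the current state and a letter of odd priority, it picks a successor. -/
def EveResolver (A : Layered Q α d) (σ : List (Q × α) → Q → α → Q) : Prop :=
  ∀ (h : List (Q × α)) (q : Q) (a : α), Odd (A.semPrio q a) → A.semStep q a (σ h q a)

/-- A resolver for Adam in `⟦A⟧` (resolving the even-priority steps). -/
def AdamResolver (A : Layered Q α d) (τ : List (Q × α) → Q → α → Q) : Prop :=
  ∀ (h : List (Q × α)) (q : Q) (a : α), Even (A.semPrio q a) → A.semStep q a (τ h q a)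

/-- A run is consistent with the Eve-resolver `σ`: every odd-priority step follows `σ`. -/
def ConsEve (A : Layered Q α d) (σ : List (Q × α) → Q → α → Q) (w : ℕ → α) (ρ : ℕ → Q) : Prop :=
  ∀ i : ℕ, Odd (A.semPrio (ρ i) (w i)) →
    ρ (i + 1) = σ (List.ofFn fun j : Fin i => (ρ (j : ℕ), w (j : ℕ))) (ρ i) (w i)

/-- A run is consistent with the Adam-resolver `τ`: every even-priority step follows `τ`. -/
def ConsAdam (A : Layered Q α d) (τ : List (Q × α) → Q → α → Q) (w : ℕ → α) (ρ : ℕ → Q) : Prop :=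
  ∀ i : ℕ, Even (A.semPrio (ρ i) (w i)) →
    ρ (i + 1) = τ (List.ofFn fun j : Fin i => (ρ (j : ℕ), w (j : ℕ))) (ρ i) (w i)

/-- Acceptance of `w` by `⟦A⟧` from the (leaf) state `p`: Eve has a winning strategy
in the game `G(⟦A⟧,w)`, i.e. a resolver all of whose consistent runs satisfy parity. -/
def SemAccept (A : Layered Q α d) (p : Q) (w : ℕ → α) : Prop :=
  ∃ σ : List (Q × α) → Q → α → Q, A.EveResolver σ ∧
    ∀ ρ : ℕ → Q, A.IsSemRun w p ρ → A.ConsEve σ w ρ → ParityAccept (A.runPrios w ρ)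

/-- Uniform semantic determinism: leaf states with the same layer-1 ancestor
recognise the same language in `⟦A⟧`. -/
def UnifSD (A : Layered Q α d) : Prop :=
  ∀ p q : Q, A.IsLeaf p → A.IsLeaf q → A.muHat 1 p = A.muHat 1 q →
    ∀ w : ℕ → α, (A.SemAccept p w ↔ A.SemAccept q w)

/-! #### Longest suffix resolvers -/

/-- `v` is a suffix-witness to `r`: the layer of `r` has a run labelled `v` ending in `r`. -/
def suffixReaches (A : Layered Q α d) (r : Q) (v : List α) : Prop :=
  ∃ p : Q, A.layer p = A.layer r ∧ A.runList p v = some r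

/-- The length of the longest suffix `v` of `u` such that the layer of `r` has a
run labelled `v` ending in `r`. -/
def longestSuffixLen (A : Layered Q α d) (u : List α) (r : Q) : ℕ :=
  Nat.findGreatest (fun k => k ≤ u.length ∧ A.suffixReaches r (u.drop (u.length - k))) u.length

/-- A longest suffix resolver for Eve, initialised to `u0`: a valid Eve-resolver that,
at a step of odd priority `x` after having read `v`, moves to an `a`-successor `q'`
maximising the length of the longest `(x+1)`-suffix of `u0·v·a` to `μ̂_{x+1} q'`. -/
def IsLongestSuffixResolverE (A : Layered Q α d) (u0 : List α)
    (σ : List (Q × α) → Q → α → Q) : Prop :=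
  A.EveResolver σ ∧
  ∀ (h : List (Q × α)) (q : Q) (a : α), Odd (A.semPrio q a) →
    ∀ q' : Q, A.semStep q a q' →
      A.longestSuffixLen (u0 ++ h.map Prod.snd ++ [a]) (A.muHat (A.semPrio q a + 1) q') ≤
      A.longestSuffixLen (u0 ++ h.map Prod.snd ++ [a]) (A.muHat (A.semPrio q a + 1) (σ h q a))

/-- A longest suffix resolver for Adam, initialised to `u0` (symmetric, for even priorities). -/
def IsLongestSuffixResolverA (A : Layered Q α d) (u0 : List α)
    (τ : List (Q × α) → Q → α → Q) : Prop :=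
  A.AdamResolver τ ∧
  ∀ (h : List (Q × α)) (q : Q) (a : α), Even (A.semPrio q a) →
    ∀ q' : Q, A.semStep q a q' →
      A.longestSuffixLen (u0 ++ h.map Prod.snd ++ [a]) (A.muHat (A.semPrio q a + 1) q') ≤
      A.longestSuffixLen (u0 ++ h.map Prod.snd ++ [a]) (A.muHat (A.semPrio q a + 1) (τ h q a))

/-! #### The random walk on `⟦A⟧` -/

/-- The uniform step probability of the random walk of `⟦A⟧`. -/
def stepProb (A : Layered Q α d) (q : Q) (a : α) (q' : Q) : ENNReal :=
  if A.semStep q a q' then ((Nat.card {p : Q // A.semStep q a p} : ENNReal))⁻¹ else 0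

/-- `m` is the Markov measure of the random walk of `⟦A⟧` over the word `w` started at `p`:
a probability measure on `ℕ → Q` whose cylinder probabilities are the products of the
uniform step probabilities. -/
def IsWalkMeasure [MeasurableSpace Q] (A : Layered Q α d) (w : ℕ → α) (p : Q)
    (m : MeasureTheory.Measure (ℕ → Q)) : Prop :=
  MeasureTheory.IsProbabilityMeasure m ∧
  ∀ (n : ℕ) (s : Fin (n + 1) → Q),
    m {ρ : ℕ → Q | ∀ i : Fin (n + 1), ρ (i : ℕ) = s i} =
      (if s 0 = p then 1 else 0) *
        ∏ i : Fin n, A.stepProb (s i.castSucc) (w (i : ℕ)) (s i.succ)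

/-! #### Normal form, centrality, safe minimality, central sequences -/

/-- Normal form: (N1) every layer `x ≥ 2` is a union of non-trivial SCCs, and
(N2) the safe language of every child is strictly smaller than that of its parent. -/
def NormalForm (A : Layered Q α d) : Prop :=
  ∀ q : Q, 2 ≤ A.layer q →
    (∀ (u : List α) (q' : Q), A.runList q u = some q' →
      ∃ v : List α, v ≠ [] ∧ A.runList q' v = some q) ∧
    (∀ p : Q, 1 < A.layer p → A.μ p = q →
      ∃ u : List α, (A.runList q u).isSome = true ∧ A.runList p u = none)

/-- Inclusion of `x`-safe languages. -/
def SafeLE (A : Layered Q α d) (x : ℕ) (p q : Q) : Prop :=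
  (∀ u : List α, A.SafeFin x p u → A.SafeFin x q u) ∧
  (∀ w : ℕ → α, A.SafeInf x p w → A.SafeInf x q w)

/-- Centralised: siblings (same parent) whose safe languages are included,
lie in the same SCC of their layer. -/
def Centralised (A : Layered Q α d) : Prop :=
  ∀ p q : Q, 2 ≤ A.layer p → A.layer q = A.layer p →
    A.muHat (A.layer p - 1) p = A.muHat (A.layer p - 1) q →
    A.SafeLE (A.layer p) p q →
    (∃ u : List α, A.runList p u = some q) ∧ (∃ v : List α, A.runList q v = some p)

/-- `L(p) = L(q)`: all leaves above (the layer-1 ancestor of) `p` and all leaves above `q`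
recognise the same language in `⟦A⟧`. -/
def LangEq1 (A : Layered Q α d) (p q : Q) : Prop :=
  ∀ l l' : Q, A.IsLeaf l → A.IsLeaf l' → A.muHat 1 l = A.muHat 1 p →
    A.muHat 1 l' = A.muHat 1 q → ∀ w : ℕ → α, (A.SemAccept l w ↔ A.SemAccept l' w)

/-- The equivalence `p ≈_x q`: language equivalence together with equality of all
`y`-safe languages for `2 ≤ y ≤ x`. -/
def ApproxEq (A : Layered Q α d) (x : ℕ) (p q : Q) : Prop :=
  A.LangEq1 p q ∧ ∀ y : ℕ, 2 ≤ y → y ≤ x →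
    ((∀ u : List α, A.SafeFin y p u ↔ A.SafeFin y q u) ∧
     (∀ w : ℕ → α, A.SafeInf y p w ↔ A.SafeInf y q w))

/-- Safe minimality: `≈_x`-equivalent states of the same layer are equal. -/
def SafeMinimal (A : Layered Q α d) : Prop :=
  ∀ p q : Q, A.layer p = A.layer q → A.ApproxEq (A.layer p) p q → p = q

/-- `z` is a central sequence for the state `p` (of layer `x = layer p`). -/
def IsCentralSeq (A : Layered Q α d) (p : Q) (z : List α) : Prop :=
  z ≠ [] ∧ A.runList p z = some p ∧
  (∀ q : Q, A.layer q = A.layer p →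
    A.muHat (A.layer p - 1) q = A.muHat (A.layer p - 1) p →
    (A.runList q z = some p ∨ A.runList q z = none)) ∧
  (∀ q' : Q, A.layer q' = A.layer p + 1 →
    A.muHat (A.layer p - 1) q' = A.muHat (A.layer p - 1) p →
    A.runList q' z = none)

end Layered

/-! ### Morphisms of layered automata -/

/-- A morphism of layered automata. -/
structure IsLayMorphism {Q R α : Type} {d d' : ℕ} (A : Layered Q α d) (B : Layered R α d')
    (φ : Q → R) : Prop where
  map_init : φ A.init = B.init
  map_step : ∀ q a q', A.δ q a = some q' → B.δ (φ q) a = some (φ q')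
  map_anc : ∀ p q, A.IsAncestor p q → B.IsAncestor (φ p) (φ q)

/-- A strong morphism of layered automata additionally preserves non-transitions. -/
def IsStrongLayMorphism {Q R α : Type} {d d' : ℕ} (A : Layered Q α d) (B : Layered R α d')
    (φ : Q → R) : Prop :=
  IsLayMorphism A B φ ∧ ∀ q a, A.δ q a = none → B.δ (φ q) a = none

/-- An isomorphism of layered automata: a bijection on states that restricts to
isomorphisms of the layer transition systems, preserves the initial state, and
commutes with the morphisms `μ`. -/
structure IsLayIso {Q R α : Type} {d d' : ℕ} (A : Layered Q α d) (B : Layered R α d')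
    (φ : Q ≃ R) : Prop where
  map_layer : ∀ q, B.layer (φ q) = A.layer q
  map_init : φ A.init = B.init
  map_mu : ∀ q, φ (A.μ q) = B.μ (φ q)
  map_step : ∀ q a, (A.δ q a).map φ = B.δ (φ q) a

/-- `L(⟦A⟧) = L(⟦B⟧)`: the semantics automata (with any choice of initial leaf states
above the respective initial states) accept the same infinite words. -/
def SemLangEq {Q R α : Type} {d d' : ℕ} (A : Layered Q α d) (B : Layered R α d') : Prop :=
  ∀ (p : Q) (q : R), A.IsLeaf p → A.muHat 1 p = A.init → B.IsLeaf q → B.muHat 1 q = B.init →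
    ∀ w : ℕ → α, (A.SemAccept p w ↔ B.SemAccept q w)

/-! ### Deterministic parity automata -/

/-- A deterministic parity automaton over `α` with priorities in `[1,d]`. -/
structure DPA (Q α : Type) (d : ℕ) where
  init : Q
  next : Q → α → Q
  prio : Q → α → ℕ
  prio_pos : ∀ q a, 1 ≤ prio q a
  prio_le : ∀ q a, prio q a ≤ d

namespace DPA

variable {Q α : Type} {d : ℕ}

/-- The unique run of a DPA on an infinite word. -/
def run (B : DPA Q α d) (w : ℕ → α) : ℕ → Q
  | 0 => B.init
  | n + 1 => B.next (run B w n) (w n)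

/-- Acceptance by a DPA: the priorities along the unique run satisfy parity. -/
def Accepts (B : DPA Q α d) (w : ℕ → α) : Prop :=
  ParityAccept (fun i => B.prio (B.run w i) (w i))

end DPA

/-- `L` is ω-regular: recognised by some deterministic parity automaton. -/
def IsOmegaRegular {α : Type} (L : Set (ℕ → α)) : Prop :=
  ∃ (n d : ℕ) (B : DPA (Fin n) α d), ∀ w : ℕ → α, w ∈ L ↔ B.Accepts w

/-! ### Nondeterministic coBüchi automata -/

/-- A (complete) nondeterministic coBüchi automaton: transitions carry priorities in `{1,2}`. -/
structure NCA (Q α : Type) where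
  init : Q
  trans : Q → α → ℕ → Q → Prop
  prio_mem : ∀ q a x q', trans q a x q' → x = 1 ∨ x = 2
  complete : ∀ q a, ∃ x q', trans q a x q'

namespace NCA

variable {Q α : Type}

/-- Nondeterministic acceptance from the state `q`. -/
def AcceptFrom (B : NCA Q α) (q : Q) (w : ℕ → α) : Prop :=
  ∃ (ρ : ℕ → Q) (pri : ℕ → ℕ), ρ 0 = q ∧
    (∀ i : ℕ, B.trans (ρ i) (w i) (pri i) (ρ (i + 1))) ∧ ParityAccept pri

/-- Semantic determinism: every `a`-successor of `p` recognises `a⁻¹ L(p)`. -/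
def SemDet (B : NCA Q α) : Prop :=
  ∀ p a x q, B.trans p a x q →
    ∀ w : ℕ → α, (B.AcceptFrom q w ↔ B.AcceptFrom p (prependW [a] w))

/-- Safe determinism: all `a`-transitions from a state carry the same priority, and
there is at most one `a`-transition of priority `2` from each state. -/
def SafeDet (B : NCA Q α) : Prop :=
  (∀ q a x q' x' q'', B.trans q a x q' → B.trans q a x' q'' → x = x') ∧
  (∀ q a q' q'', B.trans q a 2 q' → B.trans q a 2 q'' → q' = q'')

/-- 1-saturation: priority-1 transitions go to all language-equivalent states. -/
def OneSaturated (B : NCA Q α) : Prop :=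
  ∀ q a p p', B.trans q a 1 p →
    (∀ w : ℕ → α, (B.AcceptFrom p' w ↔ B.AcceptFrom p w)) → B.trans q a 1 p'

end NCA

/-! ### Simple-by-priorities alternating parity automata (abstract) -/

/-- A simple-by-priorities alternating parity automaton: a complete transition system
over `α × [1,d]` in which all `a`-transitions from a state carry the same priority. -/
structure SPA (Q α : Type) (d : ℕ) where
  init : Q
  step : Q → α → Q → Prop
  prio : Q → α → ℕ
  prio_pos : ∀ q a, 1 ≤ prio q a
  prio_le : ∀ q a, prio q a ≤ d
  complete : ∀ q a, ∃ q', step q a q'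

/-! ### The congruence on tuples of finite words -/

/-- The data of the congruence at one level (tuples of a fixed length,
represented as reversed lists of components: the head is the last component). -/
structure CongrLevel (α : Type) where
  bot : List (List α) → Prop
  eq : List (List α) → List (List α) → Prop
  ptd : List (List α) → Prop

/-- Concatenate a finite word to the last component of a tuple
(tuples are represented as reversed lists: the head is the last component). -/
def tcat {α : Type} (t : List (List α)) (v : List α) : List (List α) :=
  match t with
  | h :: rest => (h ++ v) :: rest
  | [] => []

/-- Merge the last two components of a tuple. -/
def tmerge {α : Type} (t : List (List α)) : List (List α) :=
  match t with
  | u' :: h :: rest => (h ++ u') :: rest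
  | t' => t'

/-- The congruence data at level `n` (handling tuples of length `n+1`), defined by
recursion on the level, following the inductive definition of `≈ ⊥`, `≈` and `pointed`. -/
def congrData {α : Type} [Inhabited α] (L : Set (ℕ → α)) : ℕ → CongrLevel α
  | 0 =>
    { bot := fun _ => False
      eq := fun t s =>
        match t, s with
        | [u], [v] => ∀ w : ℕ → α, (prependW u w ∈ L ↔ prependW v w ∈ L)
        | _, _ => False
      ptd := fun _ => True }
  | n + 1 =>
    let C := congrData L n
    let bot : List (List α) → Prop := fun t =>
      match t with
      | u' :: ubar =>
        C.bot (tmerge (u' :: ubar)) ∨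
        ∀ w : List α, w ≠ [] → C.eq (tcat (tmerge (u' :: ubar)) w) ubar →
          ((prependW ubar.reverse.flatten (perWord (u' ++ w)) ∈ L) ↔ Even (n + 1))
      | [] => True
    let eq : List (List α) → List (List α) → Prop := fun t s =>
      C.eq (tmerge t) (tmerge s) ∧ ∀ v : List α, (bot (tcat t v) ↔ bot (tcat s v))
    let ptd : List (List α) → Prop := fun t =>
      match t with
      | u' :: ubar =>
        ¬ bot (u' :: ubar) ∧ C.ptd ubar ∧
        ∀ (vbar : List (List α)) (v' : List α), vbar.length = n + 1 → C.ptd vbar →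
          C.eq (tcat vbar v') ubar → ¬ bot ((v' ++ u') :: vbar) →
          eq ((v' ++ u') :: vbar) (u' :: ubar)
      | [] => False
    { bot := bot, eq := eq, ptd := ptd }

/-- `t ≈ ⊥` (for a nonempty tuple `t`, in reversed representation). -/
def TupBot {α : Type} [Inhabited α] (L : Set (ℕ → α)) (t : List (List α)) : Prop :=
  (congrData L (t.length - 1)).bot t

/-- `t ≈ s` (for nonempty tuples of the same length, in reversed representation). -/
def TupEq {α : Type} [Inhabited α] (L : Set (ℕ → α)) (t s : List (List α)) : Prop :=
  t.length = s.length ∧ (congrData L (t.length - 1)).eq t s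

/-- `t` is pointed. -/
def TupPointed {α : Type} [Inhabited α] (L : Set (ℕ → α)) (t : List (List α)) : Prop :=
  (congrData L (t.length - 1)).ptd t

/-- `cls` exhibits `A` as (a copy of) the congruence automaton `A_≈` of `L`: its states
are the `≈`-classes of pointed tuples (the layer being the tuple length), transitions
are given by concatenation in the last component, the initial state is the class of
`(ε)`, and the morphisms are given by merging the last two components. -/
structure IsCongrAut {α : Type} [Inhabited α] (L : Set (ℕ → α)) {Q : Type} {d : ℕ}
    (A : Layered Q α d) (cls : (t : List (List α)) → TupPointed L t → Q) : Prop where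
  surj : ∀ q : Q, ∃ (t : List (List α)) (ht : TupPointed L t), cls t ht = q
  cls_eq : ∀ t ht s hs, cls t ht = cls s hs ↔ TupEq L t s
  layer_eq : ∀ t ht, A.layer (cls t ht) = t.length
  init_eq : ∀ h : TupPointed L [([] : List α)], cls [([] : List α)] h = A.init
  step_some : ∀ t ht (a : α) (h' : TupPointed L (tcat t [a])),
    A.δ (cls t ht) a = some (cls (tcat t [a]) h')
  step_none : ∀ t ht (a : α), TupBot L (tcat t [a]) → A.δ (cls t ht) a = none
  mu_eq : ∀ (u' : List α) (ubar : List (List α)) (h : TupPointed L (u' :: ubar))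
    (h' : TupPointed L (tmerge (u' :: ubar))), ubar ≠ [] →
    A.μ (cls (u' :: ubar) h) = cls (tmerge (u' :: ubar)) h'

end

/-!
Fix a word `w` and let `x` be the maximal layer in which `w` is ultimately safe, witnessed by a
state `p` of layer `x` reached (through its layer-1 ancestor) after a prefix of `w`. By maximality
no escape to layer `x + 1` is possible, so the remaining suffix is strongly accepted or strongly
rejected by `p` according to the parity of `x`. Hence `w` is accepted iff, after some prefix, a
reached state strongly accepts the rest, and rejected iff some reached state strongly rejects the
rest; consistency forbids both at once, since both witnesses can be pushed along `w` to a common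
position, where they share their layer-1 ancestor. A morphism preserving strong acceptance
transports these witnesses from `A'` to `A`, which forces the two verdicts to agree.
-/

theorem wordPrefix_add {α : Type} (w : ℕ → α) (n k : ℕ) :
    wordPrefix w (n + k) = wordPrefix w n ++ wordPrefix (wordDrop w n) k := by
  simp [wordPrefix, wordDrop, List.ofFn_add]

theorem wordDrop_add {α : Type} (w : ℕ → α) (n k : ℕ) :
    wordDrop (wordDrop w n) k = wordDrop w (n + k) := by
  funext i
  simp [wordDrop, Nat.add_assoc]

namespace Layered

variable {Q α : Type} {d : ℕ} (A : Layered Q α d)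

theorem runList_append (q : Q) (u v : List α) :
    A.runList q (u ++ v) = (A.runList q u).bind (fun r => A.runList r v) := by
  induction u generalizing q with
  | nil => simp [runList]
  | cons a u ih =>
    cases hd : A.δ q a with
    | none => simp [runList, hd]
    | some r => simp [runList, hd, ih]

theorem runList_cons_of_δ_eq_some {q r : Q} {a : α} (hd : A.δ q a = some r) (u : List α) :
    A.runList q (a :: u) = A.runList r u := by
  simp [runList, hd]

theorem layer_of_runList_eq_some {q q' : Q} {u : List α} (h : A.runList q u = some q') :
    A.layer q' = A.layer q := by
  induction u generalizing q with
  | nil => simp_all [runList]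
  | cons a u ih =>
    cases hd : A.δ q a with
    | none => simp [runList, hd] at h
    | some r =>
      rw [A.runList_cons_of_δ_eq_some hd] at h
      rw [ih h, A.δ_layer q a r hd]

theorem runList_μ {q q' : Q} {u : List α} (h : A.runList q u = some q') (hq : 1 < A.layer q) :
    A.runList (A.μ q) u = some (A.μ q') := by
  induction u generalizing q with
  | nil => simp_all [runList]
  | cons a u ih =>
    cases hd : A.δ q a with
    | none => simp [runList, hd] at h
    | some r =>
      rw [A.runList_cons_of_δ_eq_some hd] at h
      rw [A.runList_cons_of_δ_eq_some (A.μ_morph q a r hq hd)]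
      exact ih h (A.δ_layer q a r hd ▸ hq)

theorem isSome_runList_of_layer_eq_one {q : Q} (hq : A.layer q = 1) (u : List α) :
    (A.runList q u).isSome = true := by
  induction u generalizing q with
  | nil => simp [runList]
  | cons a u ih =>
    obtain ⟨r, hd⟩ := Option.isSome_iff_exists.mp (A.complete1 q a hq)
    rw [A.runList_cons_of_δ_eq_some hd]
    exact ih (A.δ_layer q a r hd ▸ hq)

@[simp]
theorem muHat_layer (q : Q) : A.muHat (A.layer q) q = q := by
  simp [muHat]

theorem muHat_one_of_layer_eq_one {q : Q} (hq : A.layer q = 1) : A.muHat 1 q = q := by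
  simp [muHat, hq]

theorem muHat_one_μ {q : Q} (hq : 1 < A.layer q) : A.muHat 1 (A.μ q) = A.muHat 1 q := by
  have hl := A.μ_layer q hq
  unfold muHat
  rw [show A.layer q - 1 = (A.layer (A.μ q) - 1) + 1 by omega, Function.iterate_add_apply,
    Function.iterate_one]

theorem layer_muHat_one (q : Q) : A.layer (A.muHat 1 q) = 1 := by
  by_cases hq : 1 < A.layer q
  · rw [← A.muHat_one_μ hq]
    exact layer_muHat_one (A.μ q)
  · have hq : A.layer q = 1 := le_antisymm (not_lt.mp hq) (A.layer_pos q)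
    rw [A.muHat_one_of_layer_eq_one hq, hq]
termination_by A.layer q
decreasing_by have := A.μ_layer q hq; omega

theorem runList_muHat_one {q q' : Q} {u : List α} (h : A.runList q u = some q') :
    A.runList (A.muHat 1 q) u = some (A.muHat 1 q') := by
  have hl := A.layer_of_runList_eq_some h
  by_cases hq : 1 < A.layer q
  · rw [← A.muHat_one_μ (q := q) hq, ← A.muHat_one_μ (q := q') (by rwa [hl])]
    exact runList_muHat_one (A.runList_μ h hq)
  · have hq : A.layer q = 1 := le_antisymm (not_lt.mp hq) (A.layer_pos q)
    rwa [A.muHat_one_of_layer_eq_one hq, A.muHat_one_of_layer_eq_one (hl.trans hq)]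
termination_by A.layer q
decreasing_by have := A.μ_layer q hq; omega

theorem isAncestor_muHat_one (q : Q) : A.IsAncestor (A.muHat 1 q) q := by
  rw [IsAncestor, A.layer_muHat_one]
  exact ⟨A.layer_pos q, rfl⟩

theorem muHat_one_eq_of_isAncestor {p q : Q} (h : A.IsAncestor p q) :
    A.muHat 1 q = A.muHat 1 p := by
  obtain ⟨hle, heq⟩ := h
  have hp := A.layer_pos p
  unfold muHat at heq ⊢
  rw [show A.layer q - 1 = (A.layer p - 1) + (A.layer q - A.layer p) by omega,
    Function.iterate_add_apply, heq]

/-- The parity-free part of strong acceptance and strong rejection. -/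
def StronglySafe (p : Q) (w : ℕ → α) : Prop :=
  A.SafeInf (A.layer p) p w ∧
  ∀ (n : ℕ) (p' : Q), A.layer p' = A.layer p + 1 →
    A.runList p (wordPrefix w n) = some (A.μ p') →
    ¬ A.SafeInf (A.layer p') p' (wordDrop w n)

variable {A} in
theorem StronglySafe.drop {p : Q} {w : ℕ → α} (h : A.StronglySafe p w) (m : ℕ) :
    ∃ p₂ : Q, A.runList p (wordPrefix w m) = some p₂ ∧ A.layer p₂ = A.layer p ∧
      A.StronglySafe p₂ (wordDrop w m) := by
  have hsome : (A.runList p (wordPrefix w m)).isSome = true := by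
    simpa [SafeFin] using h.1 m
  obtain ⟨p₂, hp₂⟩ := Option.isSome_iff_exists.mp hsome
  have hl : A.layer p₂ = A.layer p := A.layer_of_runList_eq_some hp₂
  refine ⟨p₂, hp₂, hl, fun n => ?_, fun n p' hl' hrun hsafe => ?_⟩
  · have hsafe := h.1 (m + n)
    simpa [SafeFin, wordPrefix_add, A.runList_append, hp₂] using hsafe
  · refine h.2 (m + n) p' (hl' ▸ hl ▸ rfl) ?_ (by rwa [← wordDrop_add])
    rw [wordPrefix_add, A.runList_append, hp₂]
    exact hrun

def EventuallyBy (S : Q → (ℕ → α) → Prop) (w : ℕ → α) : Prop :=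
  ∃ (n : ℕ) (p : Q), A.runList A.init (wordPrefix w n) = some (A.muHat 1 p) ∧
    S p (wordDrop w n)

theorem exists_stronglySafe_add {w : ℕ → α} {n : ℕ} {p : Q}
    (hrun : A.runList A.init (wordPrefix w n) = some (A.muHat 1 p))
    (hp : A.StronglySafe p (wordDrop w n)) (m : ℕ) :
    ∃ p₂ : Q, A.runList A.init (wordPrefix w (n + m)) = some (A.muHat 1 p₂) ∧
      A.layer p₂ = A.layer p ∧ A.StronglySafe p₂ (wordDrop w (n + m)) := by
  obtain ⟨p₂, hrun₂, hl, hp₂⟩ := hp.drop m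
  refine ⟨p₂, ?_, hl, wordDrop_add w n m ▸ hp₂⟩
  rw [wordPrefix_add, A.runList_append, hrun]
  exact A.runList_muHat_one hrun₂

variable {A} in
theorem Consistent.not_eventuallyBy_stronglyAcc_and_stronglyRej (hA : A.Consistent)
    {w : ℕ → α} (hacc : A.EventuallyBy A.StronglyAcc w)
    (hrej : A.EventuallyBy A.StronglyRej w) : False := by
  obtain ⟨na, pa, hruna, hevena, hsafea⟩ := hacc
  obtain ⟨nr, pr, hrunr, hoddr, hsafer⟩ := hrej
  obtain ⟨pa₂, hruna₂, hla, hsafea₂⟩ := A.exists_stronglySafe_add hruna hsafea nr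
  obtain ⟨pr₂, hrunr₂, hlr, hsafer₂⟩ := A.exists_stronglySafe_add hrunr hsafer na
  rw [Nat.add_comm] at hrunr₂ hsafer₂
  have hanc : A.muHat 1 pa₂ = A.muHat 1 pr₂ := Option.some.inj (hruna₂.symm.trans hrunr₂)
  exact hA ⟨pa₂, pr₂, _, hanc, ⟨hla ▸ hevena, hsafea₂⟩, ⟨hlr ▸ hoddr, hsafer₂⟩⟩

theorem ultSafeFrom_init_one (w : ℕ → α) : A.UltSafeFrom A.init 1 w := by
  refine ⟨0, A.init, A.init_layer, ?_, fun n => ?_⟩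
  · simp [A.muHat_one_of_layer_eq_one A.init_layer, wordPrefix, runList]
  · rw [SafeFin, A.muHat_one_of_layer_eq_one A.init_layer]
    exact A.isSome_runList_of_layer_eq_one A.init_layer _

theorem exists_isGreatest_ultSafeFrom_init (w : ℕ → α) :
    ∃ x, IsGreatest {y | A.UltSafeFrom A.init y w} x := by
  have hbound : ∀ y, A.UltSafeFrom A.init y w → y ≤ d := by
    rintro y ⟨n, p, rfl, -, -⟩
    exact A.layer_le p
  have hd : 1 ≤ d := hbound 1 (A.ultSafeFrom_init_one w)
  exact ⟨_, Nat.findGreatest_spec hd (A.ultSafeFrom_init_one w),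
    fun y hy => Nat.le_findGreatest (hbound y hy) hy⟩

theorem layeredAcceptFrom_init_iff_even {w : ℕ → α} {x : ℕ}
    (hx : IsGreatest {y | A.UltSafeFrom A.init y w} x) :
    A.LayeredAcceptFrom A.init w ↔ Even x :=
  ⟨fun ⟨_, he, hu, hmax⟩ => le_antisymm (hx.2 hu) (hmax x hx.1) ▸ he,
    fun he => ⟨x, he, hx.1, hx.2⟩⟩

/-- An escape to a child would make `w` ultimately safe one layer higher. -/
theorem exists_stronglySafe_iff_layeredAcceptFrom_init (w : ℕ → α) :
    ∃ (n : ℕ) (p : Q), A.runList A.init (wordPrefix w n) = some (A.muHat 1 p) ∧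
      A.StronglySafe p (wordDrop w n) ∧
      (A.LayeredAcceptFrom A.init w ↔ Even (A.layer p)) := by
  obtain ⟨x, hx⟩ := A.exists_isGreatest_ultSafeFrom_init w
  obtain ⟨n, p, rfl, hrun, hsafe⟩ := hx.1
  refine ⟨n, p, hrun, ⟨hsafe, fun m p' hl' hrun' hsafe' => ?_⟩,
    A.layeredAcceptFrom_init_iff_even hx⟩
  have hp' : 1 < A.layer p' := by have := A.layer_pos p; omega
  have hult : A.UltSafeFrom A.init (A.layer p + 1) w := by
    refine ⟨n + m, p', hl', ?_, wordDrop_add w n m ▸ hl' ▸ hsafe'⟩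
    rw [wordPrefix_add, A.runList_append, hrun, Option.bind_some, ← A.muHat_one_μ hp']
    exact A.runList_muHat_one hrun'
  exact absurd (hx.2 hult) (by omega)

theorem eventuallyBy_stronglyAcc_of_layeredAcceptFrom_init {w : ℕ → α}
    (h : A.LayeredAcceptFrom A.init w) : A.EventuallyBy A.StronglyAcc w := by
  obtain ⟨n, p, hrun, hsafe, hiff⟩ := A.exists_stronglySafe_iff_layeredAcceptFrom_init w
  exact ⟨n, p, hrun, hiff.mp h, hsafe⟩

theorem eventuallyBy_stronglyRej_of_not_layeredAcceptFrom_init {w : ℕ → α}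
    (h : ¬ A.LayeredAcceptFrom A.init w) : A.EventuallyBy A.StronglyRej w := by
  obtain ⟨n, p, hrun, hsafe, hiff⟩ := A.exists_stronglySafe_iff_layeredAcceptFrom_init w
  exact ⟨n, p, hrun, Nat.not_even_iff_odd.mp (hiff.not.mp h), hsafe⟩

variable {A} in
theorem Consistent.layeredAcceptFrom_init_iff (hA : A.Consistent) (w : ℕ → α) :
    A.LayeredAcceptFrom A.init w ↔ A.EventuallyBy A.StronglyAcc w := by
  refine ⟨A.eventuallyBy_stronglyAcc_of_layeredAcceptFrom_init, fun hacc => ?_⟩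
  by_contra h
  exact hA.not_eventuallyBy_stronglyAcc_and_stronglyRej hacc
    (A.eventuallyBy_stronglyRej_of_not_layeredAcceptFrom_init h)

end Layered

namespace IsLayMorphism

open Layered

variable {Q Q' α : Type} {d d' : ℕ} {A' : Layered Q' α d'} {A : Layered Q α d} {φ : Q' → Q}

theorem runList_map (hφ : IsLayMorphism A' A φ) {q q' : Q'} {u : List α}
    (h : A'.runList q u = some q') : A.runList (φ q) u = some (φ q') := by
  induction u generalizing q with
  | nil => simp_all [runList]
  | cons a u ih =>
    cases hd : A'.δ q a with
    | none => simp [runList, hd] at h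
    | some r =>
      rw [A'.runList_cons_of_δ_eq_some hd] at h
      rw [A.runList_cons_of_δ_eq_some (hφ.map_step q a r hd)]
      exact ih h

/-- Layer 1 of `A'` is reachable from the initial state within layer 1. -/
theorem layer_map_of_layer_eq_one (hφ : IsLayMorphism A' A φ) {q : Q'} (hq : A'.layer q = 1) :
    A.layer (φ q) = 1 := by
  induction A'.reach1 q hq with
  | refl => rw [hφ.map_init, A.init_layer]
  | tail _ hstep ih =>
    obtain ⟨hb, a, hd⟩ := hstep
    rw [A.δ_layer _ a _ (hφ.map_step _ a _ hd), ih hb]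

theorem muHat_one_map (hφ : IsLayMorphism A' A φ) (q : Q') :
    A.muHat 1 (φ q) = φ (A'.muHat 1 q) := by
  rw [A.muHat_one_eq_of_isAncestor (hφ.map_anc _ _ (A'.isAncestor_muHat_one q)),
    A.muHat_one_of_layer_eq_one (hφ.layer_map_of_layer_eq_one (A'.layer_muHat_one q))]

theorem eventuallyBy_map (hφ : IsLayMorphism A' A φ) {S' : Q' → (ℕ → α) → Prop}
    {S : Q → (ℕ → α) → Prop} (hS : ∀ p w, S' p w → S (φ p) w) {w : ℕ → α}
    (h : A'.EventuallyBy S' w) : A.EventuallyBy S w := by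
  obtain ⟨n, p, hrun, hp⟩ := h
  refine ⟨n, φ p, ?_, hS _ _ hp⟩
  rw [hφ.muHat_one_map, ← hφ.map_init]
  exact hφ.runList_map hrun

theorem consistent (hφ : IsLayMorphism A' A φ)
    (hpres : ∀ (p : Q') (w : ℕ → α),
      (A'.StronglyAcc p w → A.StronglyAcc (φ p) w) ∧
      (A'.StronglyRej p w → A.StronglyRej (φ p) w))
    (hA : A.Consistent) : A'.Consistent := by
  rintro ⟨p, p', w, hanc, hacc, hrej⟩
  refine hA ⟨φ p, φ p', w, ?_, (hpres p w).1 hacc, (hpres p' w).2 hrej⟩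
  rw [hφ.muHat_one_map, hφ.muHat_one_map, hanc]

end IsLayMorphism

theorem statement_11_general {Q' Q α : Type}
    {d' d : ℕ}
    (A' : Layered Q' α d') (A : Layered Q α d) (φ : Q' → Q)
    (hφ : IsLayMorphism A' A φ)
    (hpres : ∀ (p : Q') (w : ℕ → α),
      (A'.StronglyAcc p w → A.StronglyAcc (φ p) w) ∧
      (A'.StronglyRej p w → A.StronglyRej (φ p) w))
    (hA : A.Consistent) :
    A'.Consistent ∧
      ∀ w : ℕ → α, (A'.LayeredAcceptFrom A'.init w ↔ A.LayeredAcceptFrom A.init w) := by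
  refine ⟨hφ.consistent hpres hA, fun w => ?_⟩
  rw [hA.layeredAcceptFrom_init_iff]
  refine ⟨fun h => hφ.eventuallyBy_map (fun p w => (hpres p w).1)
    (A'.eventuallyBy_stronglyAcc_of_layeredAcceptFrom_init h), fun hacc => ?_⟩
  by_contra h
  exact hA.not_eventuallyBy_stronglyAcc_and_stronglyRej hacc
    (hφ.eventuallyBy_map (fun p w => (hpres p w).2)
      (A'.eventuallyBy_stronglyRej_of_not_layeredAcceptFrom_init h))

/-- If `φ : A' → A` is a morphism of layered automata that preserves
strong acceptance and `A` is consistent, then `A'` is consistent and `A'` and `A` accept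
the same infinite words under layered acceptance. -/
theorem statement_11 {Q' Q α : Type} [Fintype Q'] [Fintype Q] [Fintype α] [Nonempty α]
    {d' d : ℕ}
    (A' : Layered Q' α d') (A : Layered Q α d) (φ : Q' → Q)
    (hφ : IsLayMorphism A' A φ)
    (hpres : ∀ (p : Q') (w : ℕ → α),
      (A'.StronglyAcc p w → A.StronglyAcc (φ p) w) ∧
      (A'.StronglyRej p w → A.StronglyRej (φ p) w))
    (hA : A.Consistent) :
    A'.Consistent ∧
      ∀ w : ℕ → α, (A'.LayeredAcceptFrom A'.init w ↔ A.LayeredAcceptFrom A.init w) :=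
  statement_11_general A' A φ hφ hpres hA
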